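/- For the shallow Transformer f(X;φ) = m^{-1/2} ∑_{i=1}^m c_i σ(U_i^⊤ a(X;W_i)) with |σ'| ≤ σ_1, for every input X with token norms ‖X_t‖_2 ≤ 1, query ‖q_X‖_2 ≤ 1, and every head i, the parameter gradients satisfy ‖∇_{U_i} f(X;φ)‖_2 ≤ m^{-1/2} |c_i| σ_1 and ‖∇_{W_i} f(X;φ)‖_F ≤ m^{-1/2} |c_i| σ_1 ‖U_i‖_2. Both bounds are uniform in the sequence length T. -/

import Mathlib

open scoped BigOperators

noncomputable section

/-- The softmax map `(σ_s(z))_t = exp(z_t) / ∑_s exp(z_s)`. -/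
def softmax {T : ℕ} (z : Fin T → ℝ) : Fin T → ℝ :=
  fun t => Real.exp (z t) / ∑ s, Real.exp (z s)

/-- Euclidean (ℓ²) norm of a finitely indexed real vector. -/
def l2 {ι : Type*} [Fintype ι] (v : ι → ℝ) : ℝ := Real.sqrt (∑ i, v i ^ 2)

/-- ℓ¹ norm. -/
def l1 {ι : Type*} [Fintype ι] (v : ι → ℝ) : ℝ := ∑ i, |v i|

/-- ℓ^∞ norm. -/
def linf {ι : Type*} [Fintype ι] (v : ι → ℝ) : ℝ := ⨆ i, |v i|

/-- Frobenius norm of a matrix given as a function. -/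
def frob {ι κ : Type*} [Fintype ι] [Fintype κ] (A : ι → κ → ℝ) : ℝ :=
  Real.sqrt (∑ i, ∑ j, A i j ^ 2)

/-- Euclidean inner product. -/
def dot {ι : Type*} [Fintype ι] (u v : ι → ℝ) : ℝ := ∑ i, u i * v i

/-- Frobenius inner product. -/
def frobDot {ι κ : Type*} [Fintype ι] [Fintype κ] (A B : ι → κ → ℝ) : ℝ :=
  ∑ i, ∑ j, A i j * B i j

/-- Jacobian matrix of softmax: `J_s(z) = diag(σ_s(z)) − σ_s(z) σ_s(z)ᵀ`. -/
def softmaxJac {T : ℕ} (z : Fin T → ℝ) : Fin T → Fin T → ℝ :=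
  fun s t => (if s = t then softmax z s else 0) - softmax z s * softmax z t

/-- Attention scores `X ᵀ W q ∈ ℝ^T`. -/
def score {d T : ℕ} (X : Fin d → Fin T → ℝ) (W : Fin d → Fin d → ℝ) (q : Fin d → ℝ) :
    Fin T → ℝ :=
  fun t => ∑ i, X i t * (∑ j, W i j * q j)

/-- Attention output `a(X;W) = X σ_s(Xᵀ W q)`. -/
def attn {d T : ℕ} (X : Fin d → Fin T → ℝ) (W : Fin d → Fin d → ℝ) (q : Fin d → ℝ) :
    Fin d → ℝ :=
  fun i => ∑ t, X i t * softmax (score X W q) t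

/-- The matrix `M(X;W) = X J_s(Xᵀ W q) Xᵀ`. -/
def Mmat {d T : ℕ} (X : Fin d → Fin T → ℝ) (W : Fin d → Fin d → ℝ) (q : Fin d → ℝ) :
    Fin d → Fin d → ℝ :=
  fun i j => ∑ s, ∑ t, X i s * softmaxJac (score X W q) s t * X j t

lemma sum_sq_nonneg' {ι : Type*} [Fintype ι] (v : ι → ℝ) : 0 ≤ ∑ i, v i ^ 2 :=
  Finset.sum_nonneg fun _ _ => sq_nonneg _

lemma l2_nonneg' {ι : Type*} [Fintype ι] (v : ι → ℝ) : 0 ≤ l2 v := Real.sqrt_nonneg _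

lemma l2_sq' {ι : Type*} [Fintype ι] (v : ι → ℝ) : l2 v ^ 2 = ∑ i, v i ^ 2 :=
  Real.sq_sqrt (sum_sq_nonneg' v)

lemma l2_smul' {ι : Type*} [Fintype ι] (a : ℝ) (v : ι → ℝ) :
    l2 (fun i => a * v i) = |a| * l2 v := by
  unfold l2
  rw [← Real.sqrt_sq_eq_abs, ← Real.sqrt_mul (sq_nonneg a), Finset.mul_sum]
  congr 1; apply Finset.sum_congr rfl; intro k _; ring

lemma l2_eq_norm' {ι : Type*} [Fintype ι] (v : ι → ℝ) :
    l2 v = ‖(WithLp.equiv 2 (ι → ℝ)).symm v‖ := by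
  rw [EuclideanSpace.norm_eq]
  unfold l2; congr 1; apply Finset.sum_congr rfl; intro k _
  simp [sq_abs]

lemma l2_sum_le' {ι κ : Type*} [Fintype ι] [Fintype κ] (f : κ → ι → ℝ) :
    l2 (fun k => ∑ s, f s k) ≤ ∑ s, l2 (f s) := by
  simp only [l2_eq_norm']
  have : (WithLp.equiv 2 (ι → ℝ)).symm (fun k => ∑ s, f s k)
      = ∑ s, (WithLp.equiv 2 (ι → ℝ)).symm (f s) := by
    ext k
    simp
  rw [this]
  exact norm_sum_le _ _

lemma abs_dot_le' {ι : Type*} [Fintype ι] (u v : ι → ℝ) :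
    |∑ j, u j * v j| ≤ l2 u * l2 v := by
  unfold l2
  rw [← Real.sqrt_mul (sum_sq_nonneg' u), ← Real.sqrt_sq_eq_abs]
  exact Real.sqrt_le_sqrt (Finset.sum_mul_sq_le_sq_mul_sq _ _ _)

lemma softmax_nonneg' {T : ℕ} (z : Fin T → ℝ) (t : Fin T) : 0 ≤ softmax z t :=
  div_nonneg (Real.exp_pos _).le (Finset.sum_nonneg fun _ _ => (Real.exp_pos _).le)

lemma softmax_sum_eq_one' {T : ℕ} [Nonempty (Fin T)] (z : Fin T → ℝ) :
    ∑ t, softmax z t = 1 := by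
  have hS : 0 < ∑ s, Real.exp (z s) :=
    Finset.sum_pos (fun _ _ => Real.exp_pos _) Finset.univ_nonempty
  unfold softmax
  rw [← Finset.sum_div, div_self hS.ne']

lemma softmax_sum_le_one' {T : ℕ} (z : Fin T → ℝ) : ∑ t, softmax z t ≤ 1 := by
  rcases isEmpty_or_nonempty (Fin T) with h | h
  · simp
  · exact (softmax_sum_eq_one' z).le

lemma sum_sq_le_one {d : ℕ} (v : Fin d → ℝ) (h : l2 v ≤ 1) : ∑ k, v k ^ 2 ≤ 1 := by
  have := l2_sq' v
  nlinarith [l2_nonneg' v]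

lemma attn_l2_le_one {d T : ℕ} (X : Fin d → Fin T → ℝ) (W : Fin d → Fin d → ℝ)
    (q : Fin d → ℝ) (hX : ∀ t, l2 (fun k => X k t) ≤ 1) :
    l2 (attn X W q) ≤ 1 := by
  set p := softmax (score X W q) with hp
  have h1 : attn X W q = fun k => ∑ t, p t * X k t := by
    funext k; unfold attn; exact Finset.sum_congr rfl fun t _ => mul_comm _ _
  rw [h1]
  calc l2 (fun k => ∑ t, p t * X k t)
      ≤ ∑ t, l2 (fun k => p t * X k t) := l2_sum_le' _
    _ = ∑ t, |p t| * l2 (fun k => X k t) := by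
        exact Finset.sum_congr rfl fun t _ => l2_smul' _ _
    _ ≤ ∑ t, p t := by
        apply Finset.sum_le_sum; intro t _
        rw [abs_of_nonneg (softmax_nonneg' _ t)]
        calc p t * l2 (fun k => X k t) ≤ p t * 1 :=
              mul_le_mul_of_nonneg_left (hX t) (softmax_nonneg' _ t)
          _ = p t := mul_one _
    _ ≤ 1 := softmax_sum_le_one' _

/-- norm bounds on the parameter gradients of the shallow Transformer.
The gradients are given by the formulas
`∇_{U_i} f = m^{-1/2} c_i σ'(U_iᵀ a_i) a_i` and
`∇_{W_i} f = m^{-1/2} c_i σ'(U_iᵀ a_i) (M_i U_i) q_Xᵀ`; both bounds are uniform in `T`. -/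
theorem transformer_gradient_norm_bounds {m d T : ℕ} (hm : 0 < m)
    (σ' : ℝ → ℝ) (σ₁ : ℝ) (hσ' : ∀ x, |σ' x| ≤ σ₁)
    (X : Fin d → Fin T → ℝ) (q : Fin d → ℝ)
    (hX : ∀ t, l2 (fun k => X k t) ≤ 1) (hq : l2 q ≤ 1)
    (c : Fin m → ℝ) (U : Fin m → Fin d → ℝ) (W : Fin m → Fin d → Fin d → ℝ)
    (i : Fin m) :
    -- ‖∇_{U_i} f‖₂ ≤ m^{-1/2} |c_i| σ₁
    l2 (fun k => (Real.sqrt m)⁻¹ * c i *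
          σ' (dot (U i) (attn X (W i) q)) * attn X (W i) q k)
      ≤ (Real.sqrt m)⁻¹ * |c i| * σ₁ ∧
    -- ‖∇_{W_i} f‖_F ≤ m^{-1/2} |c_i| σ₁ ‖U_i‖₂
    frob (fun k l => (Real.sqrt m)⁻¹ * c i *
          σ' (dot (U i) (attn X (W i) q)) *
          ((∑ j, Mmat X (W i) q k j * U i j) * q l))
      ≤ (Real.sqrt m)⁻¹ * |c i| * σ₁ * l2 (U i) := by
  set z := dot (U i) (attn X (W i) q) with hz
  set C := (Real.sqrt m)⁻¹ * c i * σ' z with hC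
  have hσ₁ : 0 ≤ σ₁ := le_trans (abs_nonneg _) (hσ' 0)
  have hs : (0:ℝ) ≤ (Real.sqrt m)⁻¹ := inv_nonneg.mpr (Real.sqrt_nonneg _)
  have hCabs : |C| ≤ (Real.sqrt m)⁻¹ * |c i| * σ₁ := by
    rw [hC, abs_mul, abs_mul, abs_of_nonneg hs]
    exact mul_le_mul_of_nonneg_left (hσ' z)
      (mul_nonneg hs (abs_nonneg _)) |>.trans_eq (by ring)
  constructor
  · -- first bound
    rw [show (fun k => (Real.sqrt m)⁻¹ * c i * σ' z * attn X (W i) q k)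
        = fun k => C * attn X (W i) q k from rfl, l2_smul']
    calc |C| * l2 (attn X (W i) q) ≤ |C| * 1 :=
          mul_le_mul_of_nonneg_left (attn_l2_le_one X (W i) q hX) (abs_nonneg _)
      _ = |C| := mul_one _
      _ ≤ _ := hCabs
  · -- second bound
    set p := softmax (score X (W i) q) with hpdef
    set A := attn X (W i) q with hAdef
    set g := fun k => ∑ j, Mmat X (W i) q k j * U i j with hg
    -- frob of C • (g ⊗ q) = |C| * l2 g * l2 q
    have hfr : frob (fun k l => C * (g k * q l)) = |C| * (l2 g * l2 q) := by
      unfold frob l2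
      rw [← Real.sqrt_sq_eq_abs,
        ← Real.sqrt_mul (sum_sq_nonneg' g) (∑ l, q l ^ 2),
        ← Real.sqrt_mul (sq_nonneg C)]
      congr 1
      rw [Finset.sum_mul_sum]
      rw [Finset.mul_sum]
      apply Finset.sum_congr rfl; intro k _
      rw [Finset.mul_sum]
      apply Finset.sum_congr rfl; intro l _
      ring
    have hgU : l2 g ≤ l2 (U i) := by
      rcases isEmpty_or_nonempty (Fin T) with hT | hT
      · have : g = fun _ => 0 := by
          funext k; rw [hg]
          apply Finset.sum_eq_zero; intro j _
          have : Mmat X (W i) q k j = 0 := by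
            unfold Mmat; simp
          rw [this, zero_mul]
        rw [this]
        have : l2 (fun _ : Fin d => (0:ℝ)) = 0 := by unfold l2; simp
        rw [this]; exact l2_nonneg' _
      · -- main case: T nonempty
        have hp1 : ∑ s, p s = 1 := softmax_sum_eq_one' _
        have hA : ∀ k, A k = ∑ s, X k s * p s := fun k => rfl
        set w : Fin T → Fin d → ℝ := fun s k => X k s - A k with hw
        have hM : ∀ k j, Mmat X (W i) q k j = ∑ s, p s * (w s k * w s j) := by
          intro k j
          have lhs : Mmat X (W i) q k j
              = (∑ s, p s * (X k s * X j s)) - A k * A j := by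
            unfold Mmat softmaxJac
            have hinner : ∀ s : Fin T,
                (∑ t, X k s * ((if s = t then p s else 0) - p s * p t) * X j t)
                = p s * (X k s * X j s) - (X k s * p s) * A j := by
              intro s
              have expand : ∀ t : Fin T,
                  X k s * ((if s = t then p s else 0) - p s * p t) * X j t
                  = (if s = t then X k s * p s * X j t else 0)
                    - (X k s * p s) * (X j t * p t) := by
                intro t
                by_cases h : s = t <;> simp [h] <;> ring
              rw [Finset.sum_congr rfl fun t _ => expand t,
                Finset.sum_sub_distrib, Finset.sum_ite_eq, hA j, ← Finset.mul_sum]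
              simp only [Finset.mem_univ, if_true]
              ring
            rw [Finset.sum_congr rfl fun s _ => hinner s, Finset.sum_sub_distrib,
              ← Finset.sum_mul, ← hA k]
          rw [lhs]
          have rhs : ∑ s, p s * (w s k * w s j)
              = (∑ s, p s * (X k s * X j s)) - A k * A j := by
            have expand : ∀ s : Fin T, p s * (w s k * w s j)
                = p s * (X k s * X j s) - A j * (X k s * p s)
                  - A k * (X j s * p s) + (A k * A j) * p s := by
              intro s; rw [hw]; ring
            rw [Finset.sum_congr rfl fun s _ => expand s]
            simp only [Finset.sum_add_distrib, Finset.sum_sub_distrib,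
              ← Finset.mul_sum, ← hA k, ← hA j, hp1]
            ring
          rw [rhs]
        -- g k = ∑ s, (p s * β s) * w s k
        have hgk : g = fun k => ∑ s, (p s * (∑ j, w s j * U i j)) * w s k := by
          funext k
          rw [hg]
          simp only [hM]
          simp_rw [Finset.sum_mul, Finset.mul_sum]
          rw [Finset.sum_comm]
          apply Finset.sum_congr rfl; intro s _
          rw [Finset.sum_mul]
          apply Finset.sum_congr rfl; intro j _
          ring
        have hsum1 : ∑ s, p s * (∑ k, (w s k) ^ 2) ≤ 1 := by
          have swap : ∑ s, p s * (∑ k, (w s k) ^ 2) = ∑ k, ∑ s, p s * (w s k) ^ 2 := by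
            simp_rw [Finset.mul_sum]; exact Finset.sum_comm
          have per_k : ∀ k, ∑ s, p s * (w s k) ^ 2
              = (∑ s, p s * (X k s) ^ 2) - (A k) ^ 2 := by
            intro k
            have expand : ∀ s : Fin T, p s * (w s k) ^ 2
                = p s * (X k s) ^ 2 - (2 * A k) * (X k s * p s)
                  + (A k) ^ 2 * p s := by
              intro s; simp only [hw]; ring
            rw [Finset.sum_congr rfl fun s _ => expand s]
            simp only [Finset.sum_add_distrib, Finset.sum_sub_distrib,
              ← Finset.mul_sum, ← hA k, hp1]
            ring
          rw [swap, Finset.sum_congr rfl fun k _ => per_k k, Finset.sum_sub_distrib]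
          have h1 : ∑ k, ∑ s, p s * (X k s) ^ 2 ≤ 1 := by
            rw [Finset.sum_comm]
            calc ∑ s, ∑ k, p s * (X k s) ^ 2
                = ∑ s, p s * ∑ k, (X k s) ^ 2 := by simp_rw [Finset.mul_sum]
              _ ≤ ∑ s, p s * 1 := Finset.sum_le_sum fun s _ =>
                  mul_le_mul_of_nonneg_left (sum_sq_le_one _ (hX s)) (softmax_nonneg' _ s)
              _ = 1 := by simp only [mul_one]; exact hp1
          nlinarith [sum_sq_nonneg' A]
        rw [hgk]
        calc l2 (fun k => ∑ s, (p s * (∑ j, w s j * U i j)) * w s k)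
            ≤ ∑ s, l2 (fun k => (p s * (∑ j, w s j * U i j)) * w s k) := l2_sum_le' _
          _ = ∑ s, |p s * (∑ j, w s j * U i j)| * l2 (w s) :=
              Finset.sum_congr rfl fun s _ => l2_smul' _ _
          _ ≤ ∑ s, p s * (l2 (w s)) ^ 2 * l2 (U i) := by
              apply Finset.sum_le_sum; intro s _
              calc |p s * (∑ j, w s j * U i j)| * l2 (w s)
                  = p s * (|∑ j, w s j * U i j| * l2 (w s)) := by
                    rw [abs_mul, abs_of_nonneg (softmax_nonneg' _ s)]; ring
                _ ≤ p s * ((l2 (w s) * l2 (U i)) * l2 (w s)) :=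
                    mul_le_mul_of_nonneg_left
                      (mul_le_mul_of_nonneg_right (abs_dot_le' _ _) (l2_nonneg' _))
                      (softmax_nonneg' _ s)
                _ = p s * (l2 (w s)) ^ 2 * l2 (U i) := by ring
          _ = (∑ s, p s * ∑ k, (w s k) ^ 2) * l2 (U i) := by
              rw [Finset.sum_mul]
              apply Finset.sum_congr rfl; intro s _
              rw [l2_sq']
          _ ≤ 1 * l2 (U i) := mul_le_mul_of_nonneg_right hsum1 (l2_nonneg' _)
          _ = l2 (U i) := one_mul _
    calc frob (fun k l => C * (g k * q l)) = |C| * (l2 g * l2 q) := hfr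
      _ ≤ ((Real.sqrt m)⁻¹ * |c i| * σ₁) * (l2 (U i) * 1) := by
          apply mul_le_mul hCabs _ (mul_nonneg (l2_nonneg' _) (l2_nonneg' _))
            (by positivity)
          exact mul_le_mul hgU hq (l2_nonneg' _) (l2_nonneg' _)
      _ = (Real.sqrt m)⁻¹ * |c i| * σ₁ * l2 (U i) := by ring
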